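/- The set of Cartesian polynomials of degree at most d in C[x,y,z,t] is not closed in the space of polynomials of degree at most d, for d ≥ 3: if F is a non-Cartesian polynomial of degree at most d−1, then the polynomials F_n = (1 + x/n)·F are Cartesian of degree at most d and converge to F as n → ∞. -/
import Mathlib


open MvPolynomial Filter

/-- A polynomial `P ∈ ℂ[x,y,z,t]` is Cartesian if `P = G(x,y)·F1 + H(z,t)·F2`
with `G`, `H` non-constant. -/
def IsCartesian (P : MvPolynomial (Fin 4) ℂ) : Prop :=
  ∃ (G H : MvPolynomial (Fin 2) ℂ) (F1 F2 : MvPolynomial (Fin 4) ℂ),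
    (∀ c : ℂ, G ≠ MvPolynomial.C c) ∧ (∀ c : ℂ, H ≠ MvPolynomial.C c) ∧
    P = MvPolynomial.rename (![0, 1] : Fin 2 → Fin 4) G * F1
        + MvPolynomial.rename (![2, 3] : Fin 2 → Fin 4) H * F2

/-- The set of Cartesian polynomials of degree at most `d` is not closed for `d ≥ 3`:
if `F` is non-Cartesian of degree at most `d − 1`, then each
`F_n = (1 + x/n)·F` is Cartesian of degree at most `d`, and `F_n → F`
coefficientwise as `n → ∞`. -/
theorem cartesian_set_not_closed
    (d : ℕ) (hd : 3 ≤ d) (F : MvPolynomial (Fin 4) ℂ)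
    (hdeg : F.totalDegree ≤ d - 1) (hF : ¬ IsCartesian F) :
    (∀ n : ℕ, 0 < n →
      IsCartesian ((1 + MvPolynomial.C ((n : ℂ)⁻¹) * MvPolynomial.X 0) * F) ∧
      ((1 + MvPolynomial.C ((n : ℂ)⁻¹) * MvPolynomial.X 0) * F).totalDegree ≤ d) ∧
    (∀ m : Fin 4 →₀ ℕ,
      Tendsto (fun n : ℕ =>
          MvPolynomial.coeff m ((1 + MvPolynomial.C ((n : ℂ)⁻¹) * MvPolynomial.X 0) * F))
        atTop (nhds (MvPolynomial.coeff m F))) := by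
  constructor
  · intro n hn
    have hinv : ((n : ℂ)⁻¹) ≠ 0 :=
      inv_ne_zero (by exact_mod_cast hn.ne')
    constructor
    · refine ⟨1 + MvPolynomial.C ((n : ℂ)⁻¹) * MvPolynomial.X 0, MvPolynomial.X 0,
        F, 0, ?_, ?_, ?_⟩
      · have h0 : (0 : Fin 2 →₀ ℕ) ≠ Finsupp.single 0 1 := by
          simp [eq_comm, Finsupp.single_eq_zero]
        intro c h
        have := congrArg (MvPolynomial.coeff (Finsupp.single 0 1)) h
        simp [MvPolynomial.coeff_add, MvPolynomial.coeff_one, MvPolynomial.coeff_C_mul,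
          MvPolynomial.coeff_X, MvPolynomial.coeff_C, if_neg h0] at this
        omega
      · have h0 : (0 : Fin 2 →₀ ℕ) ≠ Finsupp.single 0 1 := by
          simp [eq_comm, Finsupp.single_eq_zero]
        intro c h
        have := congrArg (MvPolynomial.coeff (Finsupp.single 0 1)) h
        simp [MvPolynomial.coeff_X, MvPolynomial.coeff_C, if_neg h0] at this
      · simp [map_add, map_mul, MvPolynomial.rename_X]
    · calc ((1 + MvPolynomial.C ((n : ℂ)⁻¹) * MvPolynomial.X 0) * F).totalDegree
          ≤ ((1 : MvPolynomial (Fin 4) ℂ) + MvPolynomial.C ((n : ℂ)⁻¹) * MvPolynomial.X 0).totalDegree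
            + F.totalDegree := MvPolynomial.totalDegree_mul _ _
      _ ≤ 1 + (d - 1) := by
          refine add_le_add ?_ hdeg
          refine le_trans (MvPolynomial.totalDegree_add _ _) ?_
          simp [MvPolynomial.totalDegree_one]
          refine le_trans (MvPolynomial.totalDegree_mul _ _) ?_
          simp [MvPolynomial.totalDegree_C, MvPolynomial.totalDegree_X]
      _ ≤ d := by omega
  · intro m
    have hinv : Tendsto (fun n : ℕ => ((n : ℂ))⁻¹) atTop (nhds 0) := by
      have h1 : Tendsto (fun n : ℕ => ((n : ℝ))⁻¹) atTop (nhds 0) :=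
        tendsto_inv_atTop_zero.comp tendsto_natCast_atTop_atTop
      have h2 := (Complex.continuous_ofReal.tendsto 0).comp h1
      simpa [Function.comp_def] using h2
    have key : ∀ n : ℕ,
        MvPolynomial.coeff m ((1 + MvPolynomial.C ((n : ℂ)⁻¹) * MvPolynomial.X 0) * F)
          = MvPolynomial.coeff m F
            + (n : ℂ)⁻¹ * MvPolynomial.coeff m (MvPolynomial.X 0 * F) := by
      intro n
      have : (1 + MvPolynomial.C ((n : ℂ)⁻¹) * MvPolynomial.X 0) * F
          = F + MvPolynomial.C ((n : ℂ)⁻¹) * (MvPolynomial.X 0 * F) := by ring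
      rw [this, MvPolynomial.coeff_add, MvPolynomial.coeff_C_mul]
    simp only [key]
    have := (tendsto_const_nhds (x := MvPolynomial.coeff m F) (f := atTop)).add
      (hinv.mul_const (MvPolynomial.coeff m (MvPolynomial.X 0 * F)))
    simpa using this
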